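/- Let q ≥ 2 and let 𝒯 = {X_1 → expr_1, …, X_n → expr_n} be an SLP representing T in which every variable occurs at least once in the derivation tree (vOcc(X_i) > 0 for all i). Then the edge set of the right q-gram neighbor graph satisfies E_r = {(X_i, X_{lm_q(X_{r(i)})}) : X_i has a nonterminal rule and lm_q(X_{r(i)}) ≠ null} ∪ {(X_{rm_q(X_{ℓ(i)})}, X_i) : X_i has a nonterminal rule and rm_q(X_{ℓ(i)}) ≠ null}. -/

import Mathlib

/-- A straight line program over alphabet `α`: variables are `Fin n` (variable
`X_i` of the paper corresponds to index `i-1`), each with either a terminal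
rule (a single character) or a nonterminal rule `X_i → X_j X_k` with `j,k < i`. -/
structure SLP (α : Type) where
  n : ℕ
  npos : 0 < n
  rule : Fin n → α ⊕ (Fin n × Fin n)
  wf : ∀ i jk, rule i = Sum.inr jk → jk.1 < i ∧ jk.2 < i

namespace SLP

variable {α : Type}

/-- the string `val(X_i)` derived by a variable -/
def val (S : SLP α) (i : Fin S.n) : List α :=
  match h : S.rule i with
  | Sum.inl a => [a]
  | Sum.inr jk =>
    have _h1 := (S.wf i jk h).1
    have _h2 := (S.wf i jk h).2
    S.val jk.1 ++ S.val jk.2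
termination_by i.val

/-- the last variable `X_n` -/
def lastIdx (S : SLP α) : Fin S.n := ⟨S.n - 1, Nat.sub_lt S.npos Nat.one_pos⟩

/-- the string `T` represented by the SLP -/
def text (S : SLP α) : List α := S.val S.lastIdx

/-- `T([i:j])`: the (1-based, inclusive) substring of a string -/
def substr (T : List α) (i j : ℕ) : List α := (T.drop (i - 1)).take (j + 1 - i)

/-- `pre(T,q)` -/
def spre (T : List α) (q : ℕ) : List α := T.take q

/-- `suf(T,q)` -/
def ssuf (T : List α) (q : ℕ) : List α := T.drop (T.length - q)

/-- `pre([b:e],q)` for intervals of positions -/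
def ipre (b e q : ℕ) : Finset ℕ := Finset.Icc b (min (b + q - 1) e)

/-- `suf([b:e],q)` for intervals of positions -/
def isuf (b e q : ℕ) : Finset ℕ := Finset.Icc (max b (e + 1 - q)) e

/-- `Occ(T,P)`: the set of (1-based) occurrences of `P` in `T` -/
def Occ [DecidableEq α] (T P : List α) : Finset ℕ :=
  (Finset.Icc 1 T.length).filter fun k => substr T k (k + P.length - 1) = P

/-- the multiset of labels of the nodes of the derivation tree rooted at
a node labeled `X_i` -/
def occsFrom (S : SLP α) (i : Fin S.n) : Multiset (Fin S.n) :=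
  match h : S.rule i with
  | Sum.inl _ => {i}
  | Sum.inr jk =>
    have _h1 := (S.wf i jk h).1
    have _h2 := (S.wf i jk h).2
    i ::ₘ (S.occsFrom jk.1 + S.occsFrom jk.2)
termination_by i.val

/-- `vOcc(X_i)`: the number of nodes of the derivation tree labeled `X_i` -/
def vOcc (S : SLP α) (i : Fin S.n) : ℕ := (S.occsFrom S.lastIdx).count i

/-- the string `t_i = suf(val(X_{ℓ(i)}),q-1) pre(val(X_{r(i)}),q-1)`
(and `[]` for a terminal rule) -/
def tstr (S : SLP α) (q : ℕ) (i : Fin S.n) : List α :=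
  match S.rule i with
  | Sum.inl _ => []
  | Sum.inr jk => ssuf (S.val jk.1) (q - 1) ++ spre (S.val jk.2) (q - 1)

/-- `label(X_i) = t_i([q:|t_i|])` -/
def labelStr (S : SLP α) (q : ℕ) (i : Fin S.n) : List α := (S.tstr q i).drop (q - 1)

/-- Nodes of the derivation tree are represented by the path from the root
(`false` = go to left child, `true` = go to right child).  `descend i p`
returns the label of the node reached from a node labeled `X_i` by path `p`. -/
def descend (S : SLP α) : Fin S.n → List Bool → Option (Fin S.n)
  | i, [] => some i
  | i, b :: p =>
    match S.rule i with
    | Sum.inl _ => none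
    | Sum.inr jk => S.descend (if b then jk.2 else jk.1) p

/-- the label of the node of the derivation tree reached by path `p` from the root -/
def nodeVar (S : SLP α) (p : List Bool) : Option (Fin S.n) := S.descend S.lastIdx p

/-- `p` is a valid node of the derivation tree -/
def IsNode (S : SLP α) (p : List Bool) : Prop := (S.nodeVar p).isSome

/-- the 0-based offset in `val(X_i)` of the part derived below path `p` -/
def offsetFrom (S : SLP α) : Fin S.n → List Bool → ℕ
  | _, [] => 0
  | i, b :: p =>
    match S.rule i with
    | Sum.inl _ => 0
    | Sum.inr jk =>
      if b then (S.val jk.1).length + S.offsetFrom jk.2 p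
      else S.offsetFrom jk.1 p

/-- the 0-based offset in `T` of the interval derived by node `p` -/
def offset (S : SLP α) (p : List Bool) : ℕ := S.offsetFrom S.lastIdx p

/-- `itv(v)`: the (1-based) interval of positions of `T` derived by node `p` -/
def itv (S : SLP α) (p : List Bool) : Finset ℕ :=
  match S.nodeVar p with
  | some i => Finset.Icc (S.offset p + 1) (S.offset p + (S.val i).length)
  | none => ∅

/-- `p = ξ(b,e)`: `p` is the deepest node whose interval contains `[b:e]`,
i.e. `itv(p) ⊇ [b:e]` and no proper descendant of `p` satisfies this. -/
def Stabs (S : SLP α) (p : List Bool) (b e : ℕ) : Prop :=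
  S.IsNode p ∧ Finset.Icc b e ⊆ S.itv p ∧
  ∀ p' : List Bool, p <+: p' → p ≠ p' → S.IsNode p' → ¬ Finset.Icc b e ⊆ S.itv p'

/-- `X_j` is a right `q`-gram neighbor of `X_i` -/
def RightNbr (S : SLP α) (q : ℕ) (i j : Fin S.n) : Prop :=
  i ≠ j ∧ ∃ u p p', 1 ≤ u ∧ u + q ≤ S.text.length ∧
    S.Stabs p u (u + q - 1) ∧ S.nodeVar p = some i ∧
    S.Stabs p' (u + 1) (u + q) ∧ S.nodeVar p' = some j

/-- `lm_q(X_i)`: the last variable of length `≥ q` on the sequence `i, ℓ(i), ℓ(ℓ(i)), …`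
(meaningful when `|val(X_i)| ≥ q`) -/
def lm (S : SLP α) (q : ℕ) (i : Fin S.n) : Fin S.n :=
  match h : S.rule i with
  | Sum.inl _ => i
  | Sum.inr jk =>
    have := (S.wf i jk h).1
    if (S.val jk.1).length < q then i else S.lm q jk.1
termination_by i.val

/-- `rm_q(X_i)`: the last variable of length `≥ q` on the sequence `i, r(i), r(r(i)), …` -/
def rm (S : SLP α) (q : ℕ) (i : Fin S.n) : Fin S.n :=
  match h : S.rule i with
  | Sum.inl _ => i
  | Sum.inr jk =>
    have := (S.wf i jk h).2
    if (S.val jk.2).length < q then i else S.rm q jk.2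
termination_by i.val

/-- `lm_q` returning `null` (`none`) when `|val(X_i)| < q` -/
def lmOpt (S : SLP α) (q : ℕ) (i : Fin S.n) : Option (Fin S.n) :=
  if (S.val i).length < q then none else some (S.lm q i)

/-- `rm_q` returning `null` (`none`) when `|val(X_i)| < q` -/
def rmOpt (S : SLP α) (q : ℕ) (i : Fin S.n) : Option (Fin S.n) :=
  if (S.val i).length < q then none else some (S.rm q i)

/-- `LSpine S i k`: `k` occurs in the sequence `i, ℓ(i), ℓ(ℓ(i)), …`
(the leftmost path of the derivation subtree rooted at a node labeled `X_i`) -/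
inductive LSpine (S : SLP α) : Fin S.n → Fin S.n → Prop
  | refl (i : Fin S.n) : LSpine S i i
  | step {i k : Fin S.n} {jk : Fin S.n × Fin S.n} :
      S.rule i = Sum.inr jk → LSpine S jk.1 k → LSpine S i k

end SLP

/-!
For `b < e`, the node `ξ(b,e)` is the unique node `v` labeled by a nonterminal whose interval
contains `[b:e]` and whose split point (the last position of `ℓ(v)`) lies in `[b:e-1]`.
The nodes `ξ(u,u+q-1)` and `ξ(u+1,u+q)` both cover position `u+1` (as `q ≥ 2`), so one is an
ancestor of the other. If `ξ(u,u+q-1)`, labeled `X_i`, is the proper ancestor, its split point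
must be `u`, so `ξ(u+1,u+q)` is the deepest node covering the length-`q` prefix of `r(v)`; going
down left children while they still have length `≥ q` reaches it, and its label is
`lm_q(X_{r(i)})`. The other case is the mirror image with `rm_q`. Conversely, each node labeled
by a nonterminal `X_i` with `|val(X_{r(i)})| ≥ q` (resp. `|val(X_{ℓ(i)})| ≥ q`) produces the two
windows around its split point, and `vOcc > 0` provides such a node.
-/

namespace SLP

variable {α : Type} (S : SLP α)

lemma val_of_rule_inl {i : Fin S.n} {a : α} (h : S.rule i = Sum.inl a) : S.val i = [a] := by
  rw [val]; split <;> simp_all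

lemma val_of_rule_inr {i : Fin S.n} {jk : Fin S.n × Fin S.n} (h : S.rule i = Sum.inr jk) :
    S.val i = S.val jk.1 ++ S.val jk.2 := by
  rw [val]; split <;> simp_all

lemma length_val_of_rule_inr {i : Fin S.n} {jk : Fin S.n × Fin S.n} (h : S.rule i = Sum.inr jk) :
    (S.val i).length = (S.val jk.1).length + (S.val jk.2).length := by
  rw [S.val_of_rule_inr h, List.length_append]

lemma length_val_pos (i : Fin S.n) : 0 < (S.val i).length := by
  match h : S.rule i with
  | Sum.inl a => simp [S.val_of_rule_inl h]
  | Sum.inr jk =>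
    have := (S.wf i jk h).1
    have := length_val_pos jk.1
    rw [S.length_val_of_rule_inr h]; omega
termination_by i.val

lemma exists_rule_eq_inr_of_two_le_length {i : Fin S.n} (h : 2 ≤ (S.val i).length) :
    ∃ jk, S.rule i = Sum.inr jk := by
  match hr : S.rule i with
  | Sum.inl a => simp [S.val_of_rule_inl hr] at h
  | Sum.inr jk => exact ⟨jk, rfl⟩

lemma lm_of_rule_inl (q : ℕ) {i : Fin S.n} {a : α} (h : S.rule i = Sum.inl a) : S.lm q i = i := by
  rw [lm]; split <;> simp_all

lemma lm_of_rule_inr (q : ℕ) {i : Fin S.n} {jk : Fin S.n × Fin S.n} (h : S.rule i = Sum.inr jk) :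
    S.lm q i = if (S.val jk.1).length < q then i else S.lm q jk.1 := by
  rw [lm]; split <;> simp_all

lemma rm_of_rule_inl (q : ℕ) {i : Fin S.n} {a : α} (h : S.rule i = Sum.inl a) : S.rm q i = i := by
  rw [rm]; split <;> simp_all

lemma rm_of_rule_inr (q : ℕ) {i : Fin S.n} {jk : Fin S.n × Fin S.n} (h : S.rule i = Sum.inr jk) :
    S.rm q i = if (S.val jk.2).length < q then i else S.rm q jk.2 := by
  rw [rm]; split <;> simp_all

lemma lm_le (q : ℕ) (i : Fin S.n) : S.lm q i ≤ i := by
  match h : S.rule i with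
  | Sum.inl a => rw [S.lm_of_rule_inl q h]
  | Sum.inr jk =>
    have hlt := (S.wf i jk h).1
    have := lm_le q jk.1
    rw [S.lm_of_rule_inr q h]; split
    · exact le_rfl
    · exact this.trans hlt.le
termination_by i.val

lemma rm_le (q : ℕ) (i : Fin S.n) : S.rm q i ≤ i := by
  match h : S.rule i with
  | Sum.inl a => rw [S.rm_of_rule_inl q h]
  | Sum.inr jk =>
    have hlt := (S.wf i jk h).2
    have := rm_le q jk.2
    rw [S.rm_of_rule_inr q h]; split
    · exact le_rfl
    · exact this.trans hlt.le
termination_by i.val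

lemma lmOpt_eq_some_iff {q : ℕ} {i j : Fin S.n} :
    S.lmOpt q i = some j ↔ q ≤ (S.val i).length ∧ S.lm q i = j := by
  unfold lmOpt; split_ifs <;> simp <;> omega

lemma rmOpt_eq_some_iff {q : ℕ} {i j : Fin S.n} :
    S.rmOpt q i = some j ↔ q ≤ (S.val i).length ∧ S.rm q i = j := by
  unfold rmOpt; split_ifs <;> simp <;> omega

lemma descend_cons_of_rule_inl {i : Fin S.n} {a : α} (h : S.rule i = Sum.inl a) (b : Bool)
    (t : List Bool) : S.descend i (b :: t) = none := by
  simp [descend, h]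

lemma descend_cons_of_rule_inr {i : Fin S.n} {jk : Fin S.n × Fin S.n} (h : S.rule i = Sum.inr jk)
    (b : Bool) (t : List Bool) :
    S.descend i (b :: t) = S.descend (if b then jk.2 else jk.1) t := by
  simp [descend, h]

lemma offsetFrom_cons_of_rule_inr {i : Fin S.n} {jk : Fin S.n × Fin S.n}
    (h : S.rule i = Sum.inr jk) (b : Bool) (t : List Bool) :
    S.offsetFrom i (b :: t) =
      if b then (S.val jk.1).length + S.offsetFrom jk.2 t else S.offsetFrom jk.1 t := by
  simp [offsetFrom, h]

lemma descend_append (i : Fin S.n) (p s : List Bool) :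
    S.descend i (p ++ s) = (S.descend i p).bind (S.descend · s) := by
  induction p generalizing i with
  | nil => rfl
  | cons b t ih =>
    cases h : S.rule i with
    | inl a => simp [S.descend_cons_of_rule_inl h]
    | inr jk => rw [List.cons_append, S.descend_cons_of_rule_inr h, S.descend_cons_of_rule_inr h, ih]

lemma offsetFrom_append {i k : Fin S.n} {p : List Bool} (h : S.descend i p = some k)
    (s : List Bool) : S.offsetFrom i (p ++ s) = S.offsetFrom i p + S.offsetFrom k s := by
  induction p generalizing i with
  | nil => cases h; simp [offsetFrom]
  | cons b t ih =>
    cases hr : S.rule i with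
    | inl a => simp [S.descend_cons_of_rule_inl hr] at h
    | inr jk =>
      rw [S.descend_cons_of_rule_inr hr] at h
      rw [List.cons_append, S.offsetFrom_cons_of_rule_inr hr, S.offsetFrom_cons_of_rule_inr hr]
      cases b <;> simp only [if_true, if_false, Bool.false_eq_true] at h ⊢ <;> rw [ih h]; omega

lemma offsetFrom_add_length_le {i k : Fin S.n} {s : List Bool} (h : S.descend i s = some k) :
    S.offsetFrom i s + (S.val k).length ≤ (S.val i).length := by
  induction s generalizing i with
  | nil => cases h; simp [offsetFrom]
  | cons b t ih =>
    cases hr : S.rule i with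
    | inl a => simp [S.descend_cons_of_rule_inl hr] at h
    | inr jk =>
      rw [S.descend_cons_of_rule_inr hr] at h
      rw [S.offsetFrom_cons_of_rule_inr hr, S.length_val_of_rule_inr hr]
      cases b <;> simp only [if_true, if_false, Bool.false_eq_true] at h ⊢ <;> have := ih h <;> omega

lemma prefix_or_prefix_of_descend {i k k' : Fin S.n} {s s' : List Bool} {x : ℕ}
    (hk : S.descend i s = some k) (hk' : S.descend i s' = some k')
    (hx : S.offsetFrom i s < x ∧ x ≤ S.offsetFrom i s + (S.val k).length)
    (hx' : S.offsetFrom i s' < x ∧ x ≤ S.offsetFrom i s' + (S.val k').length) :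
    s <+: s' ∨ s' <+: s := by
  induction s generalizing i s' x with
  | nil => exact Or.inl List.nil_prefix
  | cons b t ih =>
    cases s' with
    | nil => exact Or.inr List.nil_prefix
    | cons b' t' =>
      cases hr : S.rule i with
      | inl a => simp [S.descend_cons_of_rule_inl hr] at hk
      | inr jk =>
        rw [S.descend_cons_of_rule_inr hr] at hk hk'
        rw [S.offsetFrom_cons_of_rule_inr hr] at hx hx'
        simp only [List.cons_prefix_cons]
        cases b <;> cases b' <;> simp only [if_true, if_false, Bool.false_eq_true] at hk hk' hx hx'
        · simpa using ih hk hk' hx hx'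
        · have := S.offsetFrom_add_length_le hk; omega
        · have := S.offsetFrom_add_length_le hk'; omega
        · simpa using ih (x := x - (S.val jk.1).length) hk hk' (by omega) (by omega)

lemma nodeVar_append {p : List Bool} {c : Fin S.n} (hc : S.nodeVar p = some c) (s : List Bool) :
    S.nodeVar (p ++ s) = S.descend c s := by
  rw [nodeVar, descend_append, ← nodeVar, hc, Option.bind_some]

lemma offset_append {p : List Bool} {c : Fin S.n} (hc : S.nodeVar p = some c) (s : List Bool) :
    S.offset (p ++ s) = S.offset p + S.offsetFrom c s :=
  S.offsetFrom_append hc s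

lemma offset_le_and_offset_add_length_le {p s : List Bool} {c k : Fin S.n}
    (hc : S.nodeVar p = some c) (hk : S.nodeVar (p ++ s) = some k) :
    S.offset p ≤ S.offset (p ++ s) ∧
      S.offset (p ++ s) + (S.val k).length ≤ S.offset p + (S.val c).length := by
  rw [S.nodeVar_append hc] at hk
  have := S.offsetFrom_add_length_le hk
  rw [S.offset_append hc]
  omega

lemma offset_add_length_le_length_text {p : List Bool} {k : Fin S.n} (hk : S.nodeVar p = some k) :
    S.offset p + (S.val k).length ≤ S.text.length :=
  S.offsetFrom_add_length_le hk

lemma nodeVar_append_false {p : List Bool} {c : Fin S.n} {jk : Fin S.n × Fin S.n}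
    (hc : S.nodeVar p = some c) (hr : S.rule c = Sum.inr jk) :
    S.nodeVar (p ++ [false]) = some jk.1 ∧ S.offset (p ++ [false]) = S.offset p := by
  rw [S.nodeVar_append hc, S.offset_append hc, S.descend_cons_of_rule_inr hr,
    S.offsetFrom_cons_of_rule_inr hr]
  simp [descend, offsetFrom]

lemma nodeVar_append_true {p : List Bool} {c : Fin S.n} {jk : Fin S.n × Fin S.n}
    (hc : S.nodeVar p = some c) (hr : S.rule c = Sum.inr jk) :
    S.nodeVar (p ++ [true]) = some jk.2 ∧
      S.offset (p ++ [true]) = S.offset p + (S.val jk.1).length := by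
  rw [S.nodeVar_append hc, S.offset_append hc, S.descend_cons_of_rule_inr hr,
    S.offsetFrom_cons_of_rule_inr hr]
  simp [descend, offsetFrom]

lemma itv_eq_Icc {p : List Bool} {k : Fin S.n} (hk : S.nodeVar p = some k) :
    S.itv p = Finset.Icc (S.offset p + 1) (S.offset p + (S.val k).length) := by
  rw [itv]; split <;> simp_all

lemma mem_itv {p : List Bool} {k : Fin S.n} (hk : S.nodeVar p = some k) {x : ℕ} :
    x ∈ S.itv p ↔ S.offset p < x ∧ x ≤ S.offset p + (S.val k).length := by
  rw [S.itv_eq_Icc hk, Finset.mem_Icc, Nat.add_one_le_iff]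

lemma Icc_subset_itv_iff {p : List Bool} {k : Fin S.n} (hk : S.nodeVar p = some k) {b e : ℕ}
    (hbe : b ≤ e) :
    Finset.Icc b e ⊆ S.itv p ↔ S.offset p < b ∧ e ≤ S.offset p + (S.val k).length := by
  rw [S.itv_eq_Icc hk, Finset.Icc_subset_Icc_iff hbe, Nat.add_one_le_iff]

lemma prefix_or_prefix_of_mem_itv {p p' : List Bool} {k k' : Fin S.n} {x : ℕ}
    (hk : S.nodeVar p = some k) (hk' : S.nodeVar p' = some k')
    (hx : x ∈ S.itv p) (hx' : x ∈ S.itv p') : p <+: p' ∨ p' <+: p :=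
  S.prefix_or_prefix_of_descend hk hk' ((S.mem_itv hk).1 hx) ((S.mem_itv hk').1 hx')

lemma stabs_unique {p p' : List Bool} {b e : ℕ} (hbe : b ≤ e)
    (h : S.Stabs p b e) (h' : S.Stabs p' b e) : p = p' := by
  obtain ⟨hn, hs, hd⟩ := h
  obtain ⟨hn', hs', hd'⟩ := h'
  obtain ⟨k, hk⟩ := Option.isSome_iff_exists.mp hn
  obtain ⟨k', hk'⟩ := Option.isSome_iff_exists.mp hn'
  have hb : b ∈ Finset.Icc b e := Finset.mem_Icc.2 ⟨le_rfl, hbe⟩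
  by_contra hne
  rcases S.prefix_or_prefix_of_mem_itv hk hk' (hs hb) (hs' hb) with hp | hp
  · exact hd p' hp hne hn' hs'
  · exact hd' p hp (Ne.symm hne) hn hs

lemma stabs_of_rule_inl {p : List Bool} {c : Fin S.n} {a : α} {b e : ℕ}
    (hc : S.nodeVar p = some c) (hr : S.rule c = Sum.inl a) (h : Finset.Icc b e ⊆ S.itv p) :
    S.Stabs p b e := by
  refine ⟨by simp [IsNode, hc], h, ?_⟩
  rintro _ ⟨_ | ⟨x, t⟩, rfl⟩ hne hnode
  · exact absurd (List.append_nil p).symm hne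
  · simp [IsNode, S.nodeVar_append hc, S.descend_cons_of_rule_inl hr] at hnode

lemma stabs_iff_of_rule_inr {p : List Bool} {c : Fin S.n} {jk : Fin S.n × Fin S.n} {b e : ℕ}
    (hc : S.nodeVar p = some c) (hr : S.rule c = Sum.inr jk) (hbe : b ≤ e) :
    S.Stabs p b e ↔ S.offset p < b ∧ b ≤ S.offset p + (S.val jk.1).length ∧
      S.offset p + (S.val jk.1).length < e ∧ e ≤ S.offset p + (S.val c).length := by
  obtain ⟨hl, hlo⟩ := S.nodeVar_append_false hc hr
  obtain ⟨hr', hro⟩ := S.nodeVar_append_true hc hr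
  have hlen := S.length_val_of_rule_inr hr
  constructor
  · rintro ⟨-, hsub, hdeep⟩
    have hnl := hdeep _ (List.prefix_append p [false]) (by simp) (by simp [IsNode, hl])
    have hnr := hdeep _ (List.prefix_append p [true]) (by simp) (by simp [IsNode, hr'])
    rw [S.Icc_subset_itv_iff hl hbe, hlo] at hnl
    rw [S.Icc_subset_itv_iff hr' hbe, hro] at hnr
    rw [S.Icc_subset_itv_iff hc hbe] at hsub
    omega
  · rintro ⟨h1, h2, h3, h4⟩
    refine ⟨by simp [IsNode, hc], (S.Icc_subset_itv_iff hc hbe).2 ⟨h1, h4⟩, ?_⟩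
    rintro _ ⟨_ | ⟨x, t⟩, rfl⟩ hne hnode hsub
    · exact absurd (List.append_nil p).symm hne
    obtain ⟨k, hk⟩ := Option.isSome_iff_exists.mp hnode
    rw [S.Icc_subset_itv_iff hk hbe] at hsub
    rw [List.append_cons] at hk hsub
    cases x
    · have := S.offset_le_and_offset_add_length_le hl hk
      omega
    · have := S.offset_le_and_offset_add_length_le hr' hk
      omega

lemma exists_stabs_lm (q : ℕ) {r : List Bool} {c : Fin S.n} (hc : S.nodeVar r = some c)
    (hq : q ≤ (S.val c).length) :
    ∃ p, S.nodeVar p = some (S.lm q c) ∧ S.Stabs p (S.offset r + 1) (S.offset r + q) := by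
  match hr : S.rule c with
  | Sum.inl a =>
    refine ⟨r, by rw [S.lm_of_rule_inl q hr, hc], S.stabs_of_rule_inl hc hr ?_⟩
    rw [S.itv_eq_Icc hc]
    exact Finset.Icc_subset_Icc le_rfl (by omega)
  | Sum.inr jk =>
    have := (S.wf c jk hr).1
    have hlen := S.length_val_of_rule_inr hr
    have := S.length_val_pos jk.1
    rw [S.lm_of_rule_inr q hr]
    split_ifs with hl
    · exact ⟨r, hc, (S.stabs_iff_of_rule_inr hc hr (by omega)).2 (by omega)⟩
    · obtain ⟨hchild, hoff⟩ := S.nodeVar_append_false hc hr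
      rw [← hoff]
      exact exists_stabs_lm q hchild (by omega)
termination_by c.val

lemma exists_stabs_rm (q : ℕ) {r : List Bool} {c : Fin S.n} (hc : S.nodeVar r = some c)
    (hq : q ≤ (S.val c).length) :
    ∃ p, S.nodeVar p = some (S.rm q c) ∧
      S.Stabs p (S.offset r + (S.val c).length + 1 - q) (S.offset r + (S.val c).length) := by
  match hr : S.rule c with
  | Sum.inl a =>
    refine ⟨r, by rw [S.rm_of_rule_inl q hr, hc], S.stabs_of_rule_inl hc hr ?_⟩
    rw [S.itv_eq_Icc hc]
    exact Finset.Icc_subset_Icc (by omega) le_rfl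
  | Sum.inr jk =>
    have := (S.wf c jk hr).2
    have hlen := S.length_val_of_rule_inr hr
    have := S.length_val_pos jk.2
    rw [S.rm_of_rule_inr q hr]
    split_ifs with hl
    · exact ⟨r, hc, (S.stabs_iff_of_rule_inr hc hr (by omega)).2 (by omega)⟩
    · obtain ⟨hchild, hoff⟩ := S.nodeVar_append_true hc hr
      have hend : S.offset (r ++ [true]) + (S.val jk.2).length = S.offset r + (S.val c).length := by
        omega
      rw [← hend]
      exact exists_stabs_rm q hchild (by omega)
termination_by c.val

lemma occsFrom_of_rule_inl {i : Fin S.n} {a : α} (h : S.rule i = Sum.inl a) :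
    S.occsFrom i = {i} := by
  rw [occsFrom]; split <;> simp_all

lemma occsFrom_of_rule_inr {i : Fin S.n} {jk : Fin S.n × Fin S.n} (h : S.rule i = Sum.inr jk) :
    S.occsFrom i = i ::ₘ (S.occsFrom jk.1 + S.occsFrom jk.2) := by
  rw [occsFrom]; split <;> simp_all

lemma exists_descend_eq_some_of_mem_occsFrom {i k : Fin S.n} (h : k ∈ S.occsFrom i) :
    ∃ s, S.descend i s = some k := by
  match hr : S.rule i with
  | Sum.inl a =>
    rw [S.occsFrom_of_rule_inl hr, Multiset.mem_singleton] at h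
    exact ⟨[], by rw [h]; rfl⟩
  | Sum.inr jk =>
    have := S.wf i jk hr
    rw [S.occsFrom_of_rule_inr hr, Multiset.mem_cons, Multiset.mem_add] at h
    rcases h with rfl | h | h
    · exact ⟨[], rfl⟩
    · obtain ⟨s, hs⟩ := exists_descend_eq_some_of_mem_occsFrom h
      exact ⟨false :: s, by rwa [S.descend_cons_of_rule_inr hr]⟩
    · obtain ⟨s, hs⟩ := exists_descend_eq_some_of_mem_occsFrom h
      exact ⟨true :: s, by rwa [S.descend_cons_of_rule_inr hr]⟩
termination_by i.val

lemma exists_nodeVar_eq_some_of_vOcc_pos {i : Fin S.n} (h : 0 < S.vOcc i) :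
    ∃ p, S.nodeVar p = some i :=
  S.exists_descend_eq_some_of_mem_occsFrom (Multiset.count_pos.1 h)

lemma lmOpt_eq_some_of_stabs_of_prefix {q u : ℕ} (hq : 2 ≤ q) {p p' : List Bool} {i j : Fin S.n}
    (hp : S.Stabs p u (u + q - 1)) (hi : S.nodeVar p = some i)
    (hp' : S.Stabs p' (u + 1) (u + q)) (hj : S.nodeVar p' = some j)
    (hpp' : p <+: p') (hne : p ≠ p') :
    ∃ jk, S.rule i = Sum.inr jk ∧ S.lmOpt q jk.2 = some j := by
  have hwin := (S.Icc_subset_itv_iff hi (by omega)).1 hp.2.1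
  have hwin' := (S.Icc_subset_itv_iff hj (by omega)).1 hp'.2.1
  obtain ⟨jk, hr⟩ := S.exists_rule_eq_inr_of_two_le_length (i := i) (by omega)
  have hlen := S.length_val_of_rule_inr hr
  have hsplit := (S.stabs_iff_of_rule_inr hi hr (by omega)).1 hp
  obtain ⟨_ | ⟨x, t⟩, rfl⟩ := hpp'
  · exact absurd (List.append_nil p).symm hne
  rw [List.append_cons] at hj hp' hwin'
  cases x
  · obtain ⟨hl, hlo⟩ := S.nodeVar_append_false hi hr
    have := S.offset_le_and_offset_add_length_le hl hj
    omega
  · obtain ⟨hr', hro⟩ := S.nodeVar_append_true hi hr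
    have := S.offset_le_and_offset_add_length_le hr' hj
    have hsplit_eq : S.offset (p ++ [true]) = u := by omega
    have hqr : q ≤ (S.val jk.2).length := by omega
    obtain ⟨p₀, hp₀, hst⟩ := S.exists_stabs_lm q hr' hqr
    rw [hsplit_eq] at hst
    obtain rfl := S.stabs_unique (by omega) hst hp'
    exact ⟨jk, hr, S.lmOpt_eq_some_iff.2 ⟨hqr, Option.some_injective _ (hp₀.symm.trans hj)⟩⟩

lemma rmOpt_eq_some_of_stabs_of_prefix {q u : ℕ} (hq : 2 ≤ q) {p p' : List Bool} {i j : Fin S.n}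
    (hp : S.Stabs p u (u + q - 1)) (hi : S.nodeVar p = some i)
    (hp' : S.Stabs p' (u + 1) (u + q)) (hj : S.nodeVar p' = some j)
    (hp'p : p' <+: p) (hne : p' ≠ p) :
    ∃ jk, S.rule j = Sum.inr jk ∧ S.rmOpt q jk.1 = some i := by
  have hwin := (S.Icc_subset_itv_iff hi (by omega)).1 hp.2.1
  have hwin' := (S.Icc_subset_itv_iff hj (by omega)).1 hp'.2.1
  obtain ⟨jk, hr⟩ := S.exists_rule_eq_inr_of_two_le_length (i := j) (by omega)
  have hlen := S.length_val_of_rule_inr hr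
  have hsplit := (S.stabs_iff_of_rule_inr hj hr (by omega)).1 hp'
  obtain ⟨_ | ⟨x, t⟩, rfl⟩ := hp'p
  · exact absurd (List.append_nil p').symm hne
  rw [List.append_cons] at hi hp hwin
  cases x
  · obtain ⟨hl, hlo⟩ := S.nodeVar_append_false hj hr
    have := S.offset_le_and_offset_add_length_le hl hi
    have hsplit_eq : S.offset (p' ++ [false]) + (S.val jk.1).length = u + q - 1 := by omega
    have hql : q ≤ (S.val jk.1).length := by omega
    obtain ⟨p₀, hp₀, hst⟩ := S.exists_stabs_rm q hl hql
    rw [hsplit_eq, show u + q - 1 + 1 - q = u by omega] at hst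
    obtain rfl := S.stabs_unique (by omega) hst hp
    exact ⟨jk, hr, S.rmOpt_eq_some_iff.2 ⟨hql, Option.some_injective _ (hp₀.symm.trans hi)⟩⟩
  · obtain ⟨hr', hro⟩ := S.nodeVar_append_true hj hr
    have := S.offset_le_and_offset_add_length_le hr' hi
    omega

lemma rightNbr_cases {q : ℕ} (hq : 2 ≤ q) {i j : Fin S.n} (h : S.RightNbr q i j) :
    (∃ jk, S.rule i = Sum.inr jk ∧ S.lmOpt q jk.2 = some j) ∨
      ∃ jk, S.rule j = Sum.inr jk ∧ S.rmOpt q jk.1 = some i := by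
  obtain ⟨hij, u, p, p', -, -, hp, hi, hp', hj⟩ := h
  have hne : p ≠ p' := by
    rintro rfl
    exact hij (Option.some_injective _ (hi.symm.trans hj))
  have hu : u + 1 ∈ S.itv p := hp.2.1 (Finset.mem_Icc.2 ⟨by omega, by omega⟩)
  have hu' : u + 1 ∈ S.itv p' := hp'.2.1 (Finset.mem_Icc.2 ⟨le_rfl, by omega⟩)
  rcases S.prefix_or_prefix_of_mem_itv hi hj hu hu' with hpp' | hp'p
  · exact Or.inl (S.lmOpt_eq_some_of_stabs_of_prefix hq hp hi hp' hj hpp' hne)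
  · exact Or.inr (S.rmOpt_eq_some_of_stabs_of_prefix hq hp hi hp' hj hp'p hne.symm)

lemma rightNbr_lm_of_rule_inr {q : ℕ} (hq : 2 ≤ q) {p : List Bool} {i : Fin S.n}
    {jk : Fin S.n × Fin S.n} (hi : S.nodeVar p = some i) (hr : S.rule i = Sum.inr jk)
    (hqr : q ≤ (S.val jk.2).length) : S.RightNbr q i (S.lm q jk.2) := by
  have := S.length_val_of_rule_inr hr
  have := S.length_val_pos jk.1
  have := S.offset_add_length_le_length_text hi
  obtain ⟨hr', hro⟩ := S.nodeVar_append_true hi hr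
  obtain ⟨p', hp', hst⟩ := S.exists_stabs_lm q hr' hqr
  rw [hro] at hst
  refine ⟨((S.lm_le q jk.2).trans_lt (S.wf i jk hr).2).ne', _, p, p', by omega, by omega,
    (S.stabs_iff_of_rule_inr hi hr (by omega)).2 (by omega), hi, hst, hp'⟩

lemma rightNbr_rm_of_rule_inr {q : ℕ} (hq : 2 ≤ q) {p : List Bool} {j : Fin S.n}
    {jk : Fin S.n × Fin S.n} (hj : S.nodeVar p = some j) (hr : S.rule j = Sum.inr jk)
    (hql : q ≤ (S.val jk.1).length) : S.RightNbr q (S.rm q jk.1) j := by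
  have := S.length_val_of_rule_inr hr
  have := S.length_val_pos jk.2
  have := S.offset_add_length_le_length_text hj
  obtain ⟨hl, hlo⟩ := S.nodeVar_append_false hj hr
  obtain ⟨p', hp', hst⟩ := S.exists_stabs_rm q hl hql
  set u := S.offset p + (S.val jk.1).length + 1 - q
  rw [hlo, show S.offset p + (S.val jk.1).length = u + q - 1 by omega,
    show u + q - 1 + 1 - q = u by omega] at hst
  refine ⟨((S.rm_le q jk.1).trans_lt (S.wf j jk hr).1).ne, u, p', p, by omega, by omega,
    hst, hp', (S.stabs_iff_of_rule_inr hj hr (by omega)).2 (by omega), hj⟩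

end SLP

/-- if every variable occurs in the derivation tree, then the
edge set of the right `q`-gram neighbor graph is exactly
`{(X_i, X_{lm_q(X_{r(i)})})} ∪ {(X_{rm_q(X_{ℓ(i)})}, X_i)}` (over nonterminal
variables `X_i`, restricted to the cases where `lm_q`/`rm_q` is not `null`). -/
theorem stmt7 {α : Type} (q : ℕ) (hq : 2 ≤ q) (S : SLP α)
    (hocc : ∀ i, 1 ≤ S.vOcc i) :
    {ij : Fin S.n × Fin S.n | S.RightNbr q ij.1 ij.2} =
      {ij : Fin S.n × Fin S.n |
        ∃ jk, S.rule ij.1 = Sum.inr jk ∧ S.lmOpt q jk.2 = some ij.2} ∪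
      {ij : Fin S.n × Fin S.n |
        ∃ jk, S.rule ij.2 = Sum.inr jk ∧ S.rmOpt q jk.1 = some ij.1} := by
  ext ⟨i, j⟩
  refine ⟨S.rightNbr_cases hq, ?_⟩
  rintro (⟨jk, hr, hlm⟩ | ⟨jk, hr, hrm⟩)
  · obtain ⟨hqr, rfl⟩ := S.lmOpt_eq_some_iff.1 hlm
    obtain ⟨p, hp⟩ := S.exists_nodeVar_eq_some_of_vOcc_pos (hocc i)
    exact S.rightNbr_lm_of_rule_inr hq hp hr hqr
  · obtain ⟨hql, rfl⟩ := S.rmOpt_eq_some_iff.1 hrm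
    obtain ⟨p, hp⟩ := S.exists_nodeVar_eq_some_of_vOcc_pos (hocc j)
    exact S.rightNbr_rm_of_rule_inr hq hp hr hql
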